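/- arXiv:2401.14029 — 6 statements merged into one kernel-verified Lean document; each statement's English description precedes it below -/
import Mathlib

section
/- After n recursive least-squares updates, the estimate ĥx_n equals the unique minimizer of the regularized weighted least-squares criterion Σ_{i=1}^n Σ_i^{-1} (y_i - C_i x)^2 + x^T Π^{-1} x, namely ĥx_n = (Π^{-1} + Σ_{i=1}^n Σ_i^{-1} C_i^T C_i)^{-1} Σ_{i=1}^n Σ_i^{-1} C_i^T y_i. -/
/-!
Let `A N = Π⁻¹ + ∑_{i ≤ N} Σᵢ⁻¹ Cᵢᵀ Cᵢ` and `b N = ∑_{i ≤ N} Σᵢ⁻¹ yᵢ Cᵢᵀ`. Each covariance update is the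
Sherman–Morrison formula for the rank-one update `A (N+1) = A N + Σ⁻¹ Cᵀ C`, so `P N = (A N)⁻¹`, and
the gain update preserves the normal equation `A N x̂ N = b N`. The criterion equals
`xᵀ (A N) x - 2 bᵀ x` plus a constant, and `A N` is positive definite, so its unique minimizer is
the solution `(A N)⁻¹ b N` of the normal equation.
-/

open Matrix Finset

section ShermanMorrison

variable {K m : Type*} [Field K] [Fintype m] [DecidableEq m]

theorem sherman_morrison_mul_eq_one {Q A : Matrix m m K} (hQA : Q * A = 1) (c : m → K) {σ : K}
    (hσ : σ ≠ 0) (hd : σ + c ⬝ᵥ (Q *ᵥ c) ≠ 0) :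
    (Q - (σ + c ⬝ᵥ (Q *ᵥ c))⁻¹ • vecMulVec (Q *ᵥ c) (c ᵥ* Q)) * (A + σ⁻¹ • vecMulVec c c) = 1 := by
  have hcQA : c ᵥ* Q ᵥ* A = c := by rw [vecMul_vecMul, hQA, vecMul_one]
  rw [Matrix.sub_mul, Matrix.mul_add, Matrix.mul_add]
  simp only [Matrix.smul_mul, Matrix.mul_smul, hQA, mul_vecMulVec, vecMulVec_mul, hcQA,
    smul_mulVec, vecMulVec_mulVec, op_smul_eq_smul, ← dotProduct_mulVec, smul_vecMulVec]
  set k := c ⬝ᵥ (Q *ᵥ c)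
  match_scalars
  · rfl
  · field_simp
    ring

theorem mulVec_gain_update {Q A : Matrix m m K} (hQA : Q * A = 1) {x b : m → K} (hAx : A *ᵥ x = b)
    (c : m → K) {σ : K} (η : K) (hσ : σ ≠ 0) (hd : σ + c ⬝ᵥ (Q *ᵥ c) ≠ 0) :
    (A + σ⁻¹ • vecMulVec c c) *ᵥ (x + ((σ + c ⬝ᵥ (Q *ᵥ c))⁻¹ * (η - c ⬝ᵥ x)) • (Q *ᵥ c)) =
      b + (σ⁻¹ * η) • c := by
  have hAQc : A *ᵥ (Q *ᵥ c) = c := by rw [mulVec_mulVec, mul_eq_one_comm.mp hQA, one_mulVec]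
  simp only [add_mulVec, mulVec_add, mulVec_smul, smul_mulVec, hAx, hAQc, vecMulVec_mulVec,
    op_smul_eq_smul]
  set k := c ⬝ᵥ (Q *ᵥ c)
  match_scalars
  · rfl
  · field_simp
    ring

end ShermanMorrison

theorem Matrix.PosDef.quadratic_lt_of_mulVec_eq {m : Type*} [Fintype m] {A : Matrix m m ℝ} (hA : A.PosDef) {x₀ b : m → ℝ}
    (hx₀ : A *ᵥ x₀ = b) {x : m → ℝ} (hx : x ≠ x₀) :
    x₀ ⬝ᵥ (A *ᵥ x₀) - 2 * (b ⬝ᵥ x₀) < x ⬝ᵥ (A *ᵥ x) - 2 * (b ⬝ᵥ x) := by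
  have hpos : 0 < (x - x₀) ⬝ᵥ (A *ᵥ (x - x₀)) := by
    simpa using hA.dotProduct_mulVec_pos (sub_ne_zero.mpr hx)
  have hsymm : x₀ ᵥ* A = A *ᵥ x₀ := by
    rw [← mulVec_transpose, ← conjTranspose_eq_transpose_of_trivial, hA.isHermitian.eq]
  have hcross : x₀ ⬝ᵥ (A *ᵥ x) = b ⬝ᵥ x := by rw [dotProduct_mulVec, hsymm, hx₀]
  have hexpand : (x - x₀) ⬝ᵥ (A *ᵥ (x - x₀)) =
      x ⬝ᵥ (A *ᵥ x) - x ⬝ᵥ (A *ᵥ x₀) - x₀ ⬝ᵥ (A *ᵥ x) + x₀ ⬝ᵥ (A *ᵥ x₀) := by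
    simp only [mulVec_sub, sub_dotProduct, dotProduct_sub]
    ring
  rw [hx₀, dotProduct_comm x b, hcross] at hexpand
  rw [hx₀]
  linarith [dotProduct_comm x₀ b]

theorem sum_weighted_sq_add_quadratic_eq {ι R m : Type*} [CommRing R] [Fintype m] (s : Finset ι)
    (w y : ι → R) (C : ι → m → R) (M : Matrix m m R) (z : m → R) :
    ∑ i ∈ s, w i * (y i - C i ⬝ᵥ z) ^ 2 + z ⬝ᵥ (M *ᵥ z) =
      z ⬝ᵥ ((M + ∑ i ∈ s, w i • vecMulVec (C i) (C i)) *ᵥ z)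
        - 2 * ((∑ i ∈ s, (w i * y i) • C i) ⬝ᵥ z) + ∑ i ∈ s, w i * y i ^ 2 := by
  have hterm : ∀ i ∈ s, w i * (y i - C i ⬝ᵥ z) ^ 2 =
      w i * ((C i ⬝ᵥ z) * (z ⬝ᵥ C i)) - 2 * (w i * y i * (C i ⬝ᵥ z)) + w i * y i ^ 2 := by
    intro i _
    rw [dotProduct_comm z]
    ring
  simp only [sum_congr rfl hterm, sum_add_distrib, sum_sub_distrib, add_mulVec, sum_mulVec,
    dotProduct_add, dotProduct_sum, sum_dotProduct, smul_mulVec, vecMulVec_mulVec, op_smul_eq_smul,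
    dotProduct_smul, smul_dotProduct, smul_eq_mul, mul_sum]
  ring

section RecursiveLeastSquares

variable {m : Type*}

noncomputable def infoVector (C : ℕ → m → ℝ) (Sig y : ℕ → ℝ) (N : ℕ) : m → ℝ :=
  ∑ i ∈ Icc 1 N, ((Sig i)⁻¹ * y i) • C i

theorem infoVector_succ (C : ℕ → m → ℝ) (Sig y : ℕ → ℝ) (N : ℕ) :
    infoVector C Sig y (N + 1) = infoVector C Sig y N + ((Sig (N + 1))⁻¹ * y (N + 1)) • C (N + 1) :=
  sum_Icc_succ_top (by omega) _

variable [Fintype m] [DecidableEq m]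

noncomputable def infoMatrix (Pi : Matrix m m ℝ) (C : ℕ → m → ℝ) (Sig : ℕ → ℝ) (N : ℕ) :
    Matrix m m ℝ :=
  Pi⁻¹ + ∑ i ∈ Icc 1 N, (Sig i)⁻¹ • vecMulVec (C i) (C i)

theorem infoMatrix_succ (Pi : Matrix m m ℝ) (C : ℕ → m → ℝ) (Sig : ℕ → ℝ) (N : ℕ) :
    infoMatrix Pi C Sig (N + 1) =
      infoMatrix Pi C Sig N + (Sig (N + 1))⁻¹ • vecMulVec (C (N + 1)) (C (N + 1)) := by
  rw [infoMatrix, infoMatrix, sum_Icc_succ_top (by omega), add_assoc]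

theorem rls_infoMatrix_invariant (Pi : Matrix m m ℝ) (hPi : Pi.PosDef) (C : ℕ → m → ℝ) (Sig : ℕ → ℝ)
    (hSig : ∀ i, 0 < Sig i) (y : ℕ → ℝ) (P : ℕ → Matrix m m ℝ) (xh : ℕ → m → ℝ)
    (hP0 : P 0 = Pi)
    (hPrec : ∀ i, P (i + 1) =
      P i - (Sig (i + 1) + C (i + 1) ⬝ᵥ (P i *ᵥ C (i + 1)))⁻¹ •
        vecMulVec (P i *ᵥ C (i + 1)) ((C (i + 1)) ᵥ* (P i)))
    (hx0 : xh 0 = 0)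
    (hxrec : ∀ i, xh (i + 1) =
      xh i + ((Sig (i + 1) + C (i + 1) ⬝ᵥ (P i *ᵥ C (i + 1)))⁻¹ *
        (y (i + 1) - C (i + 1) ⬝ᵥ xh i)) • (P i *ᵥ C (i + 1)))
    (N : ℕ) :
    (infoMatrix Pi C Sig N).PosDef ∧ P N * infoMatrix Pi C Sig N = 1 ∧
      infoMatrix Pi C Sig N *ᵥ xh N = infoVector C Sig y N := by
  induction N with
  | zero =>
    have hdet : IsUnit Pi.det := (isUnit_iff_isUnit_det Pi).mp hPi.isUnit
    simp only [infoMatrix, infoVector, Icc_eq_empty_of_lt zero_lt_one, sum_empty, add_zero, hP0,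
      hx0, mulVec_zero, and_true]
    exact ⟨hPi.inv, mul_nonsing_inv Pi hdet⟩
  | succ N ih =>
    obtain ⟨hA, hPA, hAx⟩ := ih
    have hσ := hSig (N + 1)
    have hPpsd : (P N).PosSemidef := by
      rw [← inv_eq_left_inv hPA]
      exact hA.inv.posSemidef
    have hd : 0 < Sig (N + 1) + C (N + 1) ⬝ᵥ (P N *ᵥ C (N + 1)) :=
      add_pos_of_pos_of_nonneg hσ (by simpa using hPpsd.dotProduct_mulVec_nonneg (C (N + 1)))
    rw [infoMatrix_succ, infoVector_succ, hPrec, hxrec]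
    refine ⟨hA.add_posSemidef ?_, sherman_morrison_mul_eq_one hPA _ hσ.ne' hd.ne',
      mulVec_gain_update hPA hAx _ _ hσ.ne' hd.ne'⟩
    simpa using (posSemidef_vecMulVec_self_star (C (N + 1))).smul (inv_nonneg.mpr hσ.le)

end RecursiveLeastSquares

/-- After `N` recursive least-squares updates, the estimate `x̂ N` equals the unique
minimizer of the regularized weighted least-squares criterion
`∑_{i=1}^N Σᵢ⁻¹ (yᵢ - Cᵢ x)² + xᵀ Π⁻¹ x`, namely
`x̂ N = (Π⁻¹ + ∑ Σᵢ⁻¹ Cᵢᵀ Cᵢ)⁻¹ ∑ Σᵢ⁻¹ Cᵢᵀ yᵢ`. -/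
theorem rls_equals_regularized_least_squares
    {n : ℕ} (Pi : Matrix (Fin n) (Fin n) ℝ) (hPi : Pi.PosDef)
    (C : ℕ → (Fin n → ℝ)) (Sig : ℕ → ℝ) (hSig : ∀ i, 0 < Sig i) (y : ℕ → ℝ)
    (P : ℕ → Matrix (Fin n) (Fin n) ℝ) (xh : ℕ → (Fin n → ℝ))
    (hP0 : P 0 = Pi)
    (hPrec : ∀ i, P (i + 1) =
      P i - (Sig (i + 1) + C (i + 1) ⬝ᵥ (P i *ᵥ C (i + 1)))⁻¹ •
        vecMulVec (P i *ᵥ C (i + 1)) ((C (i + 1)) ᵥ* (P i)))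
    (hx0 : xh 0 = 0)
    (hxrec : ∀ i, xh (i + 1) =
      xh i + ((Sig (i + 1) + C (i + 1) ⬝ᵥ (P i *ᵥ C (i + 1)))⁻¹ *
        (y (i + 1) - C (i + 1) ⬝ᵥ xh i)) • (P i *ᵥ C (i + 1)))
    (N : ℕ) :
    xh N = (Pi⁻¹ + ∑ i ∈ Finset.Icc 1 N, (Sig i)⁻¹ • vecMulVec (C i) (C i))⁻¹ *ᵥ
        (∑ i ∈ Finset.Icc 1 N, ((Sig i)⁻¹ * y i) • C i) ∧
      ∀ x : Fin n → ℝ, x ≠ xh N →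
        (∑ i ∈ Finset.Icc 1 N, (Sig i)⁻¹ * (y i - C i ⬝ᵥ xh N) ^ 2) + xh N ⬝ᵥ (Pi⁻¹ *ᵥ xh N)
          < (∑ i ∈ Finset.Icc 1 N, (Sig i)⁻¹ * (y i - C i ⬝ᵥ x) ^ 2) + x ⬝ᵥ (Pi⁻¹ *ᵥ x) := by
  obtain ⟨hA, hPA, hAx⟩ :=
    rls_infoMatrix_invariant Pi hPi C Sig hSig y P xh hP0 hPrec hx0 hxrec N
  refine ⟨?_, fun x hx => ?_⟩
  · change xh N = (infoMatrix Pi C Sig N)⁻¹ *ᵥ infoVector C Sig y N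
    rw [inv_eq_left_inv hPA, ← hAx, mulVec_mulVec, hPA, one_mulVec]
  · rw [sum_weighted_sq_add_quadratic_eq, sum_weighted_sq_add_quadratic_eq]
    exact add_lt_add_left (hA.quadratic_lt_of_mulVec_eq hAx hx) _
end

section
/- Along the saddle-point flow ẋ = -∇f(x) - A^Tλ - ρA^T(Ax-b), λ̇ = Ax - b with f convex and differentiable, the function V(x,λ) = ½‖x - x*‖² + ½‖λ - λ*‖² is nonincreasing, where (x*, λ*) satisfies ∇f(x*) + A^Tλ* = 0 and Ax* = b; specifically, the time derivative of V along solutions satisfies V̇ ≤ -ρ‖Ax - b‖² ≤ 0. -/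
/-!
Write `e = x - x*`, `d = λ - λ*`. By `Ax* = b` and `∇f(x*) = -Aᵀλ*`, the flow reads
`ė = -(∇f(x) - ∇f(x*)) - Aᵀd - ρAᵀAe`, `ḋ = Ae`. In `V̇ = ė·e + ḋ·d` the coupling terms
`-(Aᵀd)·e` and `(Ae)·d` cancel, leaving `V̇ = -(∇f(x) - ∇f(x*))·e - ρ‖Ae‖²`, and the first
term is nonpositive by monotonicity of the gradient.
-/

open Matrix

theorem HasDerivAt.dotProduct {𝕜 ι : Type*} [NontriviallyNormedField 𝕜] [Fintype ι]
    {u w : 𝕜 → ι → 𝕜} {u' w' : ι → 𝕜} {t : 𝕜}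
    (hu : HasDerivAt u u' t) (hw : HasDerivAt w w' t) :
    HasDerivAt (fun s => u s ⬝ᵥ w s) (u' ⬝ᵥ w t + u t ⬝ᵥ w') t := by
  simp only [_root_.dotProduct, ← Finset.sum_add_distrib]
  exact .fun_sum fun i _ => (hasDerivAt_pi.mp hu i).mul (hasDerivAt_pi.mp hw i)

theorem HasDerivAt.half_dotProduct_self_sub {ι : Type*} [Fintype ι]
    {u : ℝ → ι → ℝ} {u' c : ι → ℝ} {t : ℝ} (hu : HasDerivAt u u' t) :
    HasDerivAt (fun s => 1 / 2 * ((u s - c) ⬝ᵥ (u s - c))) (u' ⬝ᵥ (u t - c)) t := by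
  have h := ((hu.sub_const c).dotProduct (hu.sub_const c)).const_mul (1 / 2 : ℝ)
  refine h.congr_deriv ?_
  rw [dotProduct_comm (u t - c)]
  ring

theorem saddle_field_dotProduct_error {R ι κ : Type*} [CommRing R] [Fintype ι] [Fintype κ]
    (A : Matrix κ ι R) (ρ : R) (p e : ι → R) (d : κ → R) :
    (-p - d ᵥ* A - ρ • ((A *ᵥ e) ᵥ* A)) ⬝ᵥ e + (A *ᵥ e) ⬝ᵥ d =
      -(p ⬝ᵥ e) - ρ * ((A *ᵥ e) ⬝ᵥ (A *ᵥ e)) := by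
  simp only [sub_dotProduct, neg_dotProduct, smul_dotProduct, smul_eq_mul,
    ← dotProduct_mulVec, dotProduct_comm (A *ᵥ e) d]
  ring

theorem saddle_point_flow_lyapunov_decrease_general
    {n m : ℕ} (g : (Fin n → ℝ) → (Fin n → ℝ))
    (A : Matrix (Fin m) (Fin n) ℝ) (b : Fin m → ℝ) (ρ : ℝ) (hρ : 0 < ρ)
    -- monotonicity of the gradient of the convex function `f`:
    (hmono : ∀ x z : Fin n → ℝ, 0 ≤ (g x - g z) ⬝ᵥ (x - z))
    (xs : Fin n → ℝ) (ls : Fin m → ℝ)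
    (hstat : g xs + ls ᵥ* A = 0) (hfeas : A *ᵥ xs = b)
    (x : ℝ → (Fin n → ℝ)) (lam : ℝ → (Fin m → ℝ))
    (hx : ∀ t, HasDerivAt x (-(g (x t)) - lam t ᵥ* A - ρ • ((A *ᵥ x t - b) ᵥ* A)) t)
    (hlam : ∀ t, HasDerivAt lam (A *ᵥ x t - b) t)
    (V : ℝ → ℝ)
    (hV : ∀ t, V t = 1 / 2 * ((x t - xs) ⬝ᵥ (x t - xs)) +
                     1 / 2 * ((lam t - ls) ⬝ᵥ (lam t - ls))) :
    (∀ t, ∃ v : ℝ, HasDerivAt V v t ∧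
        v ≤ -ρ * ((A *ᵥ x t - b) ⬝ᵥ (A *ᵥ x t - b)) ∧
        -ρ * ((A *ᵥ x t - b) ⬝ᵥ (A *ᵥ x t - b)) ≤ 0) ∧
    ∀ s t : ℝ, s ≤ t → V t ≤ V s := by
  have hr : ∀ t, A *ᵥ x t - b = A *ᵥ (x t - xs) := fun t => by rw [mulVec_sub, hfeas]
  have hfield : ∀ t, -(g (x t)) - lam t ᵥ* A - ρ • ((A *ᵥ x t - b) ᵥ* A) =
      -(g (x t) - g xs) - (lam t - ls) ᵥ* A - ρ • ((A *ᵥ (x t - xs)) ᵥ* A) := fun t => by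
    rw [hr, sub_vecMul, eq_neg_of_add_eq_zero_left hstat]
    abel
  have hderiv : ∀ t, HasDerivAt V (-((g (x t) - g xs) ⬝ᵥ (x t - xs)) -
      ρ * ((A *ᵥ x t - b) ⬝ᵥ (A *ᵥ x t - b))) t := fun t => by
    rw [funext hV, hr, ← saddle_field_dotProduct_error, ← hfield, ← hr]
    exact (hx t).half_dotProduct_self_sub.add (hlam t).half_dotProduct_self_sub
  have hle : ∀ t, -((g (x t) - g xs) ⬝ᵥ (x t - xs)) - ρ * ((A *ᵥ x t - b) ⬝ᵥ (A *ᵥ x t - b)) ≤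
      -ρ * ((A *ᵥ x t - b) ⬝ᵥ (A *ᵥ x t - b)) := fun t => by linarith [hmono (x t) xs]
  have hnonpos : ∀ t, -ρ * ((A *ᵥ x t - b) ⬝ᵥ (A *ᵥ x t - b)) ≤ 0 := fun t =>
    mul_nonpos_of_nonpos_of_nonneg (neg_nonpos.mpr hρ.le)
      (Fintype.sum_nonneg fun _ => mul_self_nonneg _)
  exact ⟨fun t => ⟨_, hderiv t, hle t, hnonpos t⟩,
    fun s t hst => antitone_of_hasDerivAt_nonpos hderiv (fun t => (hle t).trans (hnonpos t)) hst⟩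

/-- Along the saddle-point flow `ẋ = -∇f(x) - Aᵀλ - ρAᵀ(Ax-b)`, `λ̇ = Ax - b`, with `f`
convex differentiable and `(x*, λ*)` a primal-dual optimal pair, the Lyapunov function
`V = ½‖x-x*‖² + ½‖λ-λ*‖²` has time derivative `V̇ ≤ -ρ‖Ax-b‖² ≤ 0` along solutions, and
is therefore nonincreasing. -/
theorem saddle_point_flow_lyapunov_decrease
    {n m : ℕ} (f : (Fin n → ℝ) → ℝ) (g : (Fin n → ℝ) → (Fin n → ℝ))
    (A : Matrix (Fin m) (Fin n) ℝ) (b : Fin m → ℝ) (ρ : ℝ) (hρ : 0 < ρ)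
    -- monotonicity of the gradient of the convex function `f`:
    (hmono : ∀ x z : Fin n → ℝ, 0 ≤ (g x - g z) ⬝ᵥ (x - z))
    (xs : Fin n → ℝ) (ls : Fin m → ℝ)
    (hstat : g xs + ls ᵥ* A = 0) (hfeas : A *ᵥ xs = b)
    (x : ℝ → (Fin n → ℝ)) (lam : ℝ → (Fin m → ℝ))
    (hx : ∀ t, HasDerivAt x (-(g (x t)) - lam t ᵥ* A - ρ • ((A *ᵥ x t - b) ᵥ* A)) t)
    (hlam : ∀ t, HasDerivAt lam (A *ᵥ x t - b) t)
    (V : ℝ → ℝ)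
    (hV : ∀ t, V t = 1 / 2 * ((x t - xs) ⬝ᵥ (x t - xs)) +
                     1 / 2 * ((lam t - ls) ⬝ᵥ (lam t - ls))) :
    (∀ t, ∃ v : ℝ, HasDerivAt V v t ∧
        v ≤ -ρ * ((A *ᵥ x t - b) ⬝ᵥ (A *ᵥ x t - b)) ∧
        -ρ * ((A *ᵥ x t - b) ⬝ᵥ (A *ᵥ x t - b)) ≤ 0) ∧
    ∀ s t : ℝ, s ≤ t → V t ≤ V s :=
  saddle_point_flow_lyapunov_decrease_general g A b ρ hρ hmono xs ls hstat hfeas x lam hx hlam V hV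
end

section
/- For the Lur'e-type discrete-time system x_{k+1} = A x_k + B u_k, y_k = C x_k, u_k = φ(y_k), where φ is L-Lipschitz with φ(0)=0, if there exists a symmetric positive definite matrix P and λ ∈ (0,1) such that (A + BΔC)^T P (A + BΔC) ⪯ λ² P for every matrix Δ with ‖Δ‖ ≤ L, then ‖x_k‖_P ≤ λ^k ‖x_0‖_P for all k, i.e., the closed loop converges linearly to the origin. -/
/-!
Along a trajectory the nonlinearity acts on the current output `y = C x` as the rank-one matrix
`Δ = φ(y) yᵀ / ‖y‖²`, whose operator norm `‖φ(y)‖ / ‖y‖` is at most `L` because `φ` is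
`L`-Lipschitz and `φ 0 = 0`. Each step of the closed loop is therefore a step of some linear
system `A + BΔC` covered by the certificate, so `V(x) = xᵀ P x` contracts by `λ²` per step;
iterate and take square roots.
-/

open Matrix

theorem Matrix.dotProduct_self_nonneg {R ι : Type*} [Ring R] [LinearOrder R]
    [IsStrictOrderedRing R] [Fintype ι] (v : ι → R) : 0 ≤ v ⬝ᵥ v :=
  Finset.sum_nonneg fun i _ => mul_self_nonneg (v i)

theorem Matrix.exists_mulVec_eq_of_dotProduct_self_le
    {R ι κ : Type*} [Field R] [LinearOrder R] [IsStrictOrderedRing R] [Fintype ι] [Fintype κ]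
    {L : R} {u : κ → R} {y : ι → R} (h : u ⬝ᵥ u ≤ L ^ 2 * (y ⬝ᵥ y)) :
    ∃ Δ : Matrix κ ι R,
      (∀ v, (Δ *ᵥ v) ⬝ᵥ (Δ *ᵥ v) ≤ L ^ 2 * (v ⬝ᵥ v)) ∧ Δ *ᵥ y = u := by
  by_cases hy : y = 0
  · subst hy
    have hu : u = 0 :=
      dotProduct_self_eq_zero.mp (le_antisymm (by simpa using h) (dotProduct_self_nonneg u))
    refine ⟨0, fun v => ?_, by simp [hu]⟩
    simpa using mul_nonneg (sq_nonneg L) (dotProduct_self_nonneg v)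
  set d := y ⬝ᵥ y
  have hd : 0 < d := (dotProduct_self_nonneg y).lt_of_ne' (dotProduct_self_eq_zero.not.mpr hy)
  have hΔ : ∀ v, (d⁻¹ • vecMulVec u y) *ᵥ v = ((y ⬝ᵥ v) / d) • u := fun v => by
    rw [smul_mulVec, vecMulVec_mulVec, op_smul_eq_smul, smul_smul, div_eq_inv_mul]
  refine ⟨d⁻¹ • vecMulVec u y, fun v => ?_, by rw [hΔ, div_self hd.ne', one_smul]⟩
  have cauchy_schwarz : (y ⬝ᵥ v) ^ 2 ≤ d * (v ⬝ᵥ v) := by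
    simpa [d, dotProduct, sq] using Finset.sum_mul_sq_le_sq_mul_sq Finset.univ y v
  rw [hΔ, dotProduct_smul, smul_dotProduct, smul_eq_mul, smul_eq_mul, ← mul_assoc, ← sq]
  calc ((y ⬝ᵥ v) / d) ^ 2 * (u ⬝ᵥ u) ≤ ((y ⬝ᵥ v) / d) ^ 2 * (L ^ 2 * d) := by gcongr
    _ = L ^ 2 * ((y ⬝ᵥ v) ^ 2 / d) := by field_simp
    _ ≤ L ^ 2 * (v ⬝ᵥ v) := by
      gcongr
      rwa [div_le_iff₀' hd]

theorem Matrix.PosSemidef.dotProduct_mulVec_conj_le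
    {R ι : Type*} [CommRing R] [PartialOrder R] [IsOrderedRing R] [StarRing R] [TrivialStar R] [Fintype ι]
    {c : R} {P M : Matrix ι ι R} (h : (c • P - Mᵀ * P * M).PosSemidef) (z : ι → R) :
    (M *ᵥ z) ⬝ᵥ (P *ᵥ (M *ᵥ z)) ≤ c * (z ⬝ᵥ (P *ᵥ z)) := by
  have := (posSemidef_iff_dotProduct_mulVec.mp h).2 z
  rw [star_trivial, sub_mulVec, dotProduct_sub, smul_mulVec, dotProduct_smul, smul_eq_mul,
    ← mulVec_mulVec, ← mulVec_mulVec, dotProduct_mulVec z Mᵀ, vecMul_transpose] at this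
  exact sub_nonneg.mp this

theorem lure_lyapunov_step
    {R ι κ μ : Type*} [Field R] [LinearOrder R] [IsStrictOrderedRing R] [StarRing R]
    [TrivialStar R] [Fintype ι] [Fintype κ] [Fintype μ]
    {A : Matrix ι ι R} {B : Matrix ι κ R} {C : Matrix μ ι R} {φ : (μ → R) → κ → R} {L : R}
    (hφ0 : φ 0 = 0)
    (hφ : ∀ y y', (φ y - φ y') ⬝ᵥ (φ y - φ y') ≤ L ^ 2 * ((y - y') ⬝ᵥ (y - y')))
    {P : Matrix ι ι R} {c : R}
    (hLMI : ∀ Δ : Matrix κ μ R, (∀ y, (Δ *ᵥ y) ⬝ᵥ (Δ *ᵥ y) ≤ L ^ 2 * (y ⬝ᵥ y)) →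
      (c • P - (A + B * Δ * C)ᵀ * P * (A + B * Δ * C)).PosSemidef)
    (z : ι → R) :
    (A *ᵥ z + B *ᵥ φ (C *ᵥ z)) ⬝ᵥ (P *ᵥ (A *ᵥ z + B *ᵥ φ (C *ᵥ z))) ≤ c * (z ⬝ᵥ (P *ᵥ z)) := by
  obtain ⟨Δ, hΔ, hΔz⟩ := exists_mulVec_eq_of_dotProduct_self_le (L := L) (u := φ (C *ᵥ z))
    (y := C *ᵥ z) (by simpa [hφ0] using hφ (C *ᵥ z) 0)
  have closed_loop : A *ᵥ z + B *ᵥ φ (C *ᵥ z) = (A + B * Δ * C) *ᵥ z := by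
    rw [add_mulVec, ← mulVec_mulVec, ← mulVec_mulVec, hΔz]
  rw [closed_loop]
  exact (hLMI Δ hΔ).dotProduct_mulVec_conj_le z

theorem lure_linear_convergence_general
    {n m p : ℕ}
    (A : Matrix (Fin n) (Fin n) ℝ) (B : Matrix (Fin n) (Fin m) ℝ)
    (C : Matrix (Fin p) (Fin n) ℝ)
    (φ : (Fin p → ℝ) → (Fin m → ℝ)) (L : ℝ)
    (hφ0 : φ 0 = 0)
    -- φ is L-Lipschitz w.r.t. the Euclidean norm:
    (hφ : ∀ y y' : Fin p → ℝ,
      (φ y - φ y') ⬝ᵥ (φ y - φ y') ≤ L ^ 2 * ((y - y') ⬝ᵥ (y - y')))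
    (P : Matrix (Fin n) (Fin n) ℝ)
    (lam : ℝ) (hlam0 : 0 < lam)
    -- the quadratic Lyapunov certificate, robust over all ‖Δ‖ ≤ L:
    (hLMI : ∀ Δ : Matrix (Fin m) (Fin p) ℝ,
      (∀ y : Fin p → ℝ, (Δ *ᵥ y) ⬝ᵥ (Δ *ᵥ y) ≤ L ^ 2 * (y ⬝ᵥ y)) →
      (lam ^ 2 • P - (A + B * Δ * C)ᵀ * P * (A + B * Δ * C)).PosSemidef)
    (x : ℕ → (Fin n → ℝ))
    (hx : ∀ k, x (k + 1) = A *ᵥ x k + B *ᵥ φ (C *ᵥ x k)) :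
    ∀ k, Real.sqrt (x k ⬝ᵥ (P *ᵥ x k)) ≤ lam ^ k * Real.sqrt (x 0 ⬝ᵥ (P *ᵥ x 0)) := by
  intro k
  have decay : x k ⬝ᵥ (P *ᵥ x k) ≤ (lam ^ k) ^ 2 * (x 0 ⬝ᵥ (P *ᵥ x 0)) := by
    rw [← pow_mul, mul_comm k, pow_mul]
    refine le_geom (u := fun j => x j ⬝ᵥ (P *ᵥ x j)) (sq_nonneg lam) k fun j _ => ?_
    rw [hx j]
    exact lure_lyapunov_step hφ0 hφ hLMI (x j)
  calc Real.sqrt (x k ⬝ᵥ (P *ᵥ x k))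
      ≤ Real.sqrt ((lam ^ k) ^ 2 * (x 0 ⬝ᵥ (P *ᵥ x 0))) := Real.sqrt_le_sqrt decay
    _ = lam ^ k * Real.sqrt (x 0 ⬝ᵥ (P *ᵥ x 0)) := by
      rw [Real.sqrt_mul (sq_nonneg _), Real.sqrt_sq (pow_nonneg hlam0.le k)]

/-- Lur'e-type discrete-time system `x⁺ = Ax + Bφ(Cx)` with `φ` `L`-Lipschitz and
`φ(0) = 0`: if there are `P ≻ 0` symmetric and `λ ∈ (0,1)` with
`(A + BΔC)ᵀ P (A + BΔC) ⪯ λ² P` for every `Δ` of (Euclidean) operator norm `≤ L`,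
then `‖x_k‖_P ≤ λ^k ‖x_0‖_P` for all `k`. -/
theorem lure_linear_convergence
    {n m p : ℕ}
    (A : Matrix (Fin n) (Fin n) ℝ) (B : Matrix (Fin n) (Fin m) ℝ)
    (C : Matrix (Fin p) (Fin n) ℝ)
    (φ : (Fin p → ℝ) → (Fin m → ℝ)) (L : ℝ) (hL : 0 ≤ L)
    (hφ0 : φ 0 = 0)
    -- φ is L-Lipschitz w.r.t. the Euclidean norm:
    (hφ : ∀ y y' : Fin p → ℝ,
      (φ y - φ y') ⬝ᵥ (φ y - φ y') ≤ L ^ 2 * ((y - y') ⬝ᵥ (y - y')))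
    (P : Matrix (Fin n) (Fin n) ℝ) (hP : P.PosDef)
    (lam : ℝ) (hlam0 : 0 < lam) (hlam1 : lam < 1)
    -- the quadratic Lyapunov certificate, robust over all ‖Δ‖ ≤ L:
    (hLMI : ∀ Δ : Matrix (Fin m) (Fin p) ℝ,
      (∀ y : Fin p → ℝ, (Δ *ᵥ y) ⬝ᵥ (Δ *ᵥ y) ≤ L ^ 2 * (y ⬝ᵥ y)) →
      (lam ^ 2 • P - (A + B * Δ * C)ᵀ * P * (A + B * Δ * C)).PosSemidef)
    (x : ℕ → (Fin n → ℝ))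
    (hx : ∀ k, x (k + 1) = A *ᵥ x k + B *ᵥ φ (C *ᵥ x k)) :
    ∀ k, Real.sqrt (x k ⬝ᵥ (P *ᵥ x k)) ≤ lam ^ k * Real.sqrt (x 0 ⬝ᵥ (P *ᵥ x 0)) :=
  lure_linear_convergence_general A B C φ L hφ0 hφ P lam hlam0 hLMI x hx
end

section
/- For the time-varying Newton flow with feedforward correction ẋ(t) = -∇_{xx}f(x;t)^{-1}(∇_x f(x;t) + ∇_{tx}f(x;t)), the gradient g(t) := ∇_x f(x(t); t) satisfies ġ(t) = -g(t) along solutions, hence ‖∇_x f(x(t);t)‖ = e^{-t}‖∇_x f(x(0);0)‖ decays exponentially to zero. -/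
open Matrix

/-- Along the time-varying Newton flow with feedforward correction
`ẋ = -∇ₓₓf(x;t)⁻¹ (∇ₓf(x;t) + ∇ₜₓf(x;t))`, the gradient `g(t) = ∇ₓf(x(t);t)`
satisfies `ġ = -g`, hence its Euclidean norm decays as `e^{-t}`. -/
theorem newton_flow_feedforward_gradient_decay
    {n : ℕ}
    (G : (Fin n → ℝ) → ℝ → (Fin n → ℝ))          -- ∇ₓ f
    (Gt : (Fin n → ℝ) → ℝ → (Fin n → ℝ))         -- ∇ₜₓ f
    (H : (Fin n → ℝ) → ℝ → Matrix (Fin n) (Fin n) ℝ)  -- ∇ₓₓ f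
    (hHinv : ∀ (p : Fin n → ℝ) (t : ℝ), IsUnit (H p t))
    (x : ℝ → (Fin n → ℝ))
    -- x is a C¹ solution of the Newton flow with feedforward:
    (hx : ∀ t, HasDerivAt x (-((H (x t) t)⁻¹ *ᵥ (G (x t) t + Gt (x t) t))) t)
    -- the chain rule for the gradient along the trajectory:
    (hchain : ∀ (t : ℝ) (v : Fin n → ℝ), HasDerivAt x v t →
      HasDerivAt (fun s => G (x s) s) (H (x t) t *ᵥ v + Gt (x t) t) t) :
    (∀ t, HasDerivAt (fun s => G (x s) s) (-(G (x t) t)) t) ∧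
    (∀ t, Real.sqrt (G (x t) t ⬝ᵥ G (x t) t) =
        Real.exp (-t) * Real.sqrt (G (x 0) 0 ⬝ᵥ G (x 0) 0)) := by
  set g : ℝ → (Fin n → ℝ) := fun s => G (x s) s with hg
  have hderiv : ∀ t, HasDerivAt g (-(g t)) t := by
    intro t
    have h := hchain t _ (hx t)
    have hcancel : H (x t) t *ᵥ (-((H (x t) t)⁻¹ *ᵥ (G (x t) t + Gt (x t) t)))
        = -(G (x t) t + Gt (x t) t) := by
      rw [mulVec_neg, mulVec_mulVec, Matrix.mul_nonsing_inv _
        ((Matrix.isUnit_iff_isUnit_det _).mp (hHinv (x t) t)), one_mulVec]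
    rw [hcancel] at h
    convert h using 1
    abel
  refine ⟨hderiv, ?_⟩
  have key : ∀ t, g t = Real.exp (-t) • g 0 := by
    have hconst : ∀ t, (fun s => Real.exp s • g s) t = (fun s => Real.exp s • g s) 0 := by
      intro t
      apply is_const_of_deriv_eq_zero (f := fun s => Real.exp s • g s)
      · intro s
        exact ((Real.hasDerivAt_exp s).smul (hderiv s)).differentiableAt
      · intro s
        have h : HasDerivAt (fun s => Real.exp s • g s)
            (Real.exp s • (-(g s)) + Real.exp s • g s) s :=
          (Real.hasDerivAt_exp s).smul (hderiv s)
        rw [h.deriv]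
        simp
    intro t
    have := hconst t
    simp only [Real.exp_zero, one_smul] at this
    rw [← this, smul_smul, ← Real.exp_add]
    simp
  intro t
  show Real.sqrt (g t ⬝ᵥ g t) = Real.exp (-t) * Real.sqrt (g 0 ⬝ᵥ g 0)
  rw [key t]
  have : (Real.exp (-t) • g 0) ⬝ᵥ (Real.exp (-t) • g 0)
      = (Real.exp (-t))^2 * (g 0 ⬝ᵥ g 0) := by
    rw [smul_dotProduct, dotProduct_smul, smul_eq_mul, smul_eq_mul]
    ring
  rw [this, Real.sqrt_mul (sq_nonneg _), Real.sqrt_sq (Real.exp_nonneg _)]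
end

section
/- Suboptimal MPC joint contraction: suppose the plant state satisfies ‖x_{t+1} - x*‖ ≤ a‖x_t - x*‖ + b‖z_t - z*(x_t)‖ and the warm-started optimizer satisfies ‖z_t - z*(x_t)‖ ≤ ρ^n ‖z_{t-1} - z*(x_t)‖, where z*(·) is ℓ-Lipschitz and a < 1, ρ < 1. Then there exists n₀ such that for all n ≥ n₀, the joint error e_t = (‖x_t - x*‖, ‖z_{t-1} - z*(x_{t-1})‖) converges geometrically to zero, i.e., the interconnection of plant and n-step optimizer is exponentially stable. -/
/-- Suboptimal MPC joint contraction via small gain: if the plant satisfies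
`‖x_{t+1} - x*‖ ≤ a‖x_t - x*‖ + b‖z_t - z*(x_t)‖` with `a < 1`, the warm-started
optimizer contracts `n` steps per sample, `‖z_{t+1} - z*(x_{t+1})‖ ≤ ρ^n ‖z t - z*(x_{t+1})‖`
with `ρ < 1`, and `z*` is `ℓ`-Lipschitz, then there is `n₀` such that for all `n ≥ n₀`
the joint error `(‖x_t - x*‖, ‖z_t - z*(x_t)‖)` converges geometrically to zero. -/
theorem suboptimal_mpc_small_gain
    {E F : Type*} [NormedAddCommGroup E] [NormedAddCommGroup F]
    (zstar : E → F) (xs : E)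
    (a b ρ ℓ : ℝ) (ha0 : 0 ≤ a) (ha : a < 1) (hb : 0 ≤ b)
    (hρ0 : 0 ≤ ρ) (hρ : ρ < 1) (hℓ : 0 ≤ ℓ)
    (hlip : ∀ x x' : E, ‖zstar x - zstar x'‖ ≤ ℓ * ‖x - x'‖) :
    ∃ n₀ : ℕ, ∀ n ≥ n₀,
      ∀ (x : ℕ → E) (z : ℕ → F),
        (∀ t, ‖x (t + 1) - xs‖ ≤ a * ‖x t - xs‖ + b * ‖z t - zstar (x t)‖) →
        (∀ t, ‖z (t + 1) - zstar (x (t + 1))‖ ≤ ρ ^ n * ‖z t - zstar (x (t + 1))‖) →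
        ∃ (c : ℝ) (r : ℝ), 0 ≤ c ∧ 0 ≤ r ∧ r < 1 ∧
          ∀ t, ‖x t - xs‖ + ‖z t - zstar (x t)‖ ≤ c * r ^ t := by
  have h1a : (0:ℝ) < 1 - a := by linarith
  -- weight and rate
  set K : ℝ := (4 * b + 1) / (1 - a) with hKdef
  have hKpos : 0 < K := by positivity
  have hK1 : 1 ≤ K := by
    rw [hKdef, le_div_iff₀ h1a]; nlinarith
  have hKeq : K * (1 - a) = 4 * b + 1 := by
    rw [hKdef]; field_simp
  set r : ℝ := (a + 3) / 4 with hrdef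
  have hr0 : 0 ≤ r := by positivity
  have hr1 : r < 1 := by rw [hrdef]; linarith
  set D : ℝ := K * ℓ * (1 + a) + 1 with hDdef
  have hDpos : 0 < D := by positivity
  set G : ℝ := 1 + ℓ * b with hGdef
  have hGpos : 0 < G := by positivity
  set ε : ℝ := min ((3 * (1 - a) / 4) / D) (((1 + a) / 2) / G) with hεdef
  have hεpos : 0 < ε := by
    apply lt_min <;> positivity
  obtain ⟨n₀, hn₀⟩ := exists_pow_lt_of_lt_one hεpos hρ
  refine ⟨n₀, fun n hn x z hx hz => ?_⟩
  set q : ℝ := ρ ^ n with hqdef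
  have hq0 : 0 ≤ q := by positivity
  have hqε : q ≤ ε := by
    calc q ≤ ρ ^ n₀ := pow_le_pow_of_le_one hρ0 hρ.le hn
    _ ≤ ε := hn₀.le
  have cond1 : q * (K * ℓ * (1 + a)) ≤ 3 * (1 - a) / 4 := by
    have h1 : q * D ≤ 3 * (1 - a) / 4 := by
      have := (le_div_iff₀ hDpos).mp (hqε.trans (min_le_left _ _))
      linarith
    nlinarith
  have cond2 : q * G ≤ (1 + a) / 2 := by
    have := (le_div_iff₀ hGpos).mp (hqε.trans (min_le_right _ _))
    linarith
  -- notation for errors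
  set u : ℕ → ℝ := fun t => ‖x t - xs‖ with hudef
  set v : ℕ → ℝ := fun t => ‖z t - zstar (x t)‖ with hvdef
  have hu0 : ∀ t, 0 ≤ u t := fun t => norm_nonneg _
  have hv0 : ∀ t, 0 ≤ v t := fun t => norm_nonneg _
  -- optimizer step bound
  have hvstep : ∀ t, v (t + 1) ≤ q * (ℓ * (1 + a) * u t + G * v t) := by
    intro t
    have h1 : ‖z t - zstar (x (t + 1))‖ ≤ v t + ℓ * (u t + u (t + 1)) := by
      have h2 : ‖z t - zstar (x (t+1))‖ ≤ ‖z t - zstar (x t)‖ + ‖zstar (x t) - zstar (x (t+1))‖ := by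
        have := norm_add_le (z t - zstar (x t)) (zstar (x t) - zstar (x (t+1)))
        simpa using this
      have h3 : ‖zstar (x t) - zstar (x (t+1))‖ ≤ ℓ * ‖x t - x (t+1)‖ := hlip _ _
      have h4 : ‖x t - x (t+1)‖ ≤ ‖x t - xs‖ + ‖x (t+1) - xs‖ := by
        have := norm_sub_le (x t - xs) (x (t+1) - xs)
        simpa using this
      have h5 : ℓ * ‖x t - x (t+1)‖ ≤ ℓ * (u t + u (t+1)) :=
        mul_le_mul_of_nonneg_left h4 hℓ
      calc ‖z t - zstar (x (t+1))‖ ≤ v t + ℓ * ‖x t - x (t+1)‖ := by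
            simpa [hvdef] using h2.trans (by linarith)
        _ ≤ v t + ℓ * (u t + u (t+1)) := by linarith
    have hx' : u (t + 1) ≤ a * u t + b * v t := hx t
    have := hz t
    calc v (t + 1) ≤ q * ‖z t - zstar (x (t + 1))‖ := this
      _ ≤ q * (v t + ℓ * (u t + u (t + 1))) := mul_le_mul_of_nonneg_left h1 hq0
      _ ≤ q * (ℓ * (1 + a) * u t + G * v t) := by
          apply mul_le_mul_of_nonneg_left _ hq0
          nlinarith [hu0 t, hv0 t, mul_le_mul_of_nonneg_left hx' hℓ]
  -- Lyapunov function
  set V : ℕ → ℝ := fun t => u t + K * v t with hVdef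
  have hVstep : ∀ t, V (t + 1) ≤ r * V t := by
    intro t
    have hx' : u (t + 1) ≤ a * u t + b * v t := hx t
    have hv' := hvstep t
    have hcu : a + q * (K * ℓ * (1 + a)) ≤ r := by
      rw [hrdef]; linarith [cond1]
    have hcv : b + K * (q * G) ≤ r * K := by
      have h2 : K * (q * G) ≤ K * ((1 + a) / 2) :=
        mul_le_mul_of_nonneg_left cond2 hKpos.le
      have h4 : r * K - b - K * ((1 + a) / 2) = 1 / 4 := by
        rw [hrdef]; linear_combination hKeq / 4
      clear_value K r q G
      linarith
    calc V (t + 1) = u (t + 1) + K * v (t + 1) := rfl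
      _ ≤ (a + q * (K * ℓ * (1 + a))) * u t + (b + K * (q * G)) * v t := by
          have h6 : u (t + 1) + K * v (t + 1) ≤
              a * u t + b * v t + K * (q * (ℓ * (1 + a) * u t + G * v t)) := by
            have h7 := mul_le_mul_of_nonneg_left hv' hKpos.le
            clear_value K r q G u v
            linarith
          clear_value K r q G u v
          exact h6.trans_eq (by ring)
      _ ≤ r * u t + (r * K) * v t := by
          have h8 := mul_le_mul_of_nonneg_right hcu (hu0 t)
          have h9 := mul_le_mul_of_nonneg_right hcv (hv0 t)
          clear_value K r q G u v
          linarith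
      _ = r * V t := by rw [hVdef]; ring
  refine ⟨V 0, r, ?_, hr0, hr1, ?_⟩
  · have := hu0 0; have := hv0 0
    have : 0 ≤ K * v 0 := mul_nonneg hKpos.le (hv0 0)
    simp only [hVdef]; linarith [hu0 0]
  · intro t
    have hVt : ∀ t, V t ≤ V 0 * r ^ t := by
      intro t
      induction t with
      | zero => simp
      | succ s ih =>
        calc V (s + 1) ≤ r * V s := hVstep s
          _ ≤ r * (V 0 * r ^ s) := mul_le_mul_of_nonneg_left ih hr0
          _ = V 0 * r ^ (s + 1) := by ring
    have h1 : u t + v t ≤ V t := by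
      have : v t ≤ K * v t := le_mul_of_one_le_left (hv0 t) hK1
      simp only [hVdef]; linarith
    exact h1.trans (hVt t)
end

section
/- Perceptron convergence (Novikoff): if a dataset (x_i, y_i) with ‖x_i‖ ≤ R and labels y_i ∈ {-1, +1} is linearly separable with margin γ > 0 by a unit vector w* (i.e., y_i (w* · x_i) ≥ γ for all i), then the perceptron algorithm—starting from w₀ = 0 and updating w ← w + y_i x_i whenever it misclassifies an example (y_i (w · x_i) ≤ 0)—makes at most R²/γ² mistakes. -/
open scoped RealInnerProductSpace

/-- Perceptron convergence (Novikoff): if the data `(xᵢ, yᵢ)` satisfy `‖xᵢ‖ ≤ R`,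
`yᵢ ∈ {-1, +1}`, and are linearly separable with margin `γ > 0` by a unit vector `w*`,
then any run of the perceptron (starting from `w₀ = 0`, updating `w ← w + yᵢ xᵢ` on a
misclassified example) makes at most `R²/γ²` mistakes. -/
theorem perceptron_convergence
    {d : ℕ} {ι : Type*} (x : ι → EuclideanSpace ℝ (Fin d)) (y : ι → ℝ)
    (R γ : ℝ) (hγ : 0 < γ)
    (hR : ∀ i, ‖x i‖ ≤ R)
    (hy : ∀ i, y i = 1 ∨ y i = -1)
    (wstar : EuclideanSpace ℝ (Fin d)) (hwstar : ‖wstar‖ = 1)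
    (hmargin : ∀ i, γ ≤ y i * ⟪wstar, x i⟫)
    (K : ℕ) (w : ℕ → EuclideanSpace ℝ (Fin d)) (idx : ℕ → ι)
    (hw0 : w 0 = 0)
    -- each of the K steps is an update on a misclassified example:
    (hmis : ∀ k < K, y (idx k) * ⟪w k, x (idx k)⟫ ≤ 0)
    (hupd : ∀ k < K, w (k + 1) = w k + y (idx k) • x (idx k)) :
    (K : ℝ) ≤ R ^ 2 / γ ^ 2 := by
  rcases Nat.eq_zero_or_pos K with hK | hK
  · subst hK
    simp only [Nat.cast_zero]
    positivity
  have hRnn : 0 ≤ R := le_trans (norm_nonneg _) (hR (idx 0))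
  have hy1 : ∀ i, (y i) ^ 2 = 1 := by
    intro i; rcases hy i with h | h <;> rw [h] <;> ring
  -- Lower bound: ⟪wstar, w k⟫ ≥ k * γ
  have hA : ∀ k ≤ K, (k : ℝ) * γ ≤ ⟪wstar, w k⟫ := by
    intro k hk
    induction k with
    | zero => simp [hw0]
    | succ k ih =>
      have hkK : k < K := hk
      have ih' := ih (le_of_lt hkK)
      rw [hupd k hkK, inner_add_right, real_inner_smul_right]
      have := hmargin (idx k)
      push_cast
      nlinarith
  -- Upper bound: ‖w k‖² ≤ k * R²
  have hB : ∀ k ≤ K, ‖w k‖ ^ 2 ≤ (k : ℝ) * R ^ 2 := by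
    intro k hk
    induction k with
    | zero => simp [hw0]
    | succ k ih =>
      have hkK : k < K := hk
      have ih' := ih (le_of_lt hkK)
      rw [hupd k hkK, norm_add_sq_real, real_inner_smul_right, norm_smul]
      have hmis' := hmis k hkK
      have hx := hR (idx k)
      have hxnn : (0:ℝ) ≤ ‖x (idx k)‖ := norm_nonneg _
      have hy2 := hy1 (idx k)
      have hnx : (‖y (idx k)‖ * ‖x (idx k)‖) ^ 2 ≤ R ^ 2 := by
        rw [mul_pow]
        have : ‖y (idx k)‖ ^ 2 = 1 := by rw [Real.norm_eq_abs, sq_abs]; exact hy2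
        rw [this, one_mul]
        nlinarith
      push_cast
      nlinarith
  have h1 := hA K le_rfl
  have h2 := hB K le_rfl
  have hcs : ⟪wstar, w K⟫ ≤ ‖w K‖ := by
    calc ⟪wstar, w K⟫ ≤ ‖wstar‖ * ‖w K‖ := real_inner_le_norm _ _
    _ = ‖w K‖ := by rw [hwstar, one_mul]
  have hKnn : (0:ℝ) < (K : ℝ) := by exact_mod_cast hK
  have hsq : ((K:ℝ) * γ) ^ 2 ≤ (K:ℝ) * R ^ 2 := by
    have h3 : (0:ℝ) ≤ (K:ℝ) * γ := by positivity
    nlinarith [norm_nonneg (w K)]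
  rw [le_div_iff₀ (by positivity)]
  nlinarith
end
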